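/- For every uncountable cardinal κ, every full set S ⊆ [κ]^ω is projective stationary. -/

import Mathlib

open Set Cardinal

noncomputable section

/-- The first uncountable ordinal `ω₁`. -/
def omega1 : Ordinal.{0} := (Cardinal.aleph 1).ord

/-- `x ∩ ω₁` is a countable ordinal. -/
def GoodSet (x : Set Ordinal.{0}) : Prop :=
  ∃ δ < omega1, x ∩ Set.Iio omega1 = Set.Iio δ

/-- `δ_x`: the countable ordinal `x ∩ ω₁`. -/
def delta (x : Set Ordinal.{0}) : Ordinal.{0} :=
  sInf {δ : Ordinal.{0} | x ∩ Set.Iio omega1 = Set.Iio δ}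

/-- The space `[X]^ω` of countable subsets of `X` (restricted, as in the paper,
to those `x` whose intersection with `ω₁` is a countable ordinal). -/
def countPow (X : Set Ordinal.{0}) : Set (Set Ordinal.{0}) :=
  {x | x ⊆ X ∧ x.Countable ∧ GoodSet x}

/-- `C` is club in `[X]^ω`: it is cofinal and closed under unions of countable
`⊆`-increasing chains. -/
def IsClubIn (X : Set Ordinal.{0}) (C : Set (Set Ordinal.{0})) : Prop :=
  C ⊆ countPow X ∧ (∀ x ∈ countPow X, ∃ y ∈ C, x ⊆ y) ∧
    ∀ D : Set (Set Ordinal.{0}), D ⊆ C → D.Countable → D.Nonempty →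
      IsChain (· ⊆ ·) D → ⋃₀ D ∈ C

/-- `S` is stationary in `[X]^ω`: it meets every club. -/
def IsStatIn (X : Set Ordinal.{0}) (S : Set (Set Ordinal.{0})) : Prop :=
  ∀ C, IsClubIn X C → (S ∩ C).Nonempty

/-- Club subsets of `ω₁` (closed unbounded in the ordinal `ω₁`). -/
def IsClubOmega1 (C : Set Ordinal.{0}) : Prop :=
  C ⊆ Set.Iio omega1 ∧ (∀ α < omega1, ∃ β ∈ C, α < β) ∧
    ∀ α < omega1, α ≠ 0 → (∀ β < α, ∃ γ ∈ C, β < γ ∧ γ < α) → α ∈ C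

/-- Stationary subsets of `ω₁`. -/
def IsStatOmega1 (A : Set Ordinal.{0}) : Prop :=
  ∀ C, IsClubOmega1 C → (A ∩ C).Nonempty

/-- A (continuous, `δ`-increasing) `ω₁`-chain: `⟨f α : α < ω₁⟩`. -/
def IsOmega1Chain (f : Ordinal.{0} → Set Ordinal.{0}) : Prop :=
  (∀ α β, α < β → β < omega1 → f α ⊆ f β) ∧
  (∀ β < omega1, Order.IsSuccLimit β → f β = ⋃ α ∈ Set.Iio β, f α) ∧
  (∀ α β, α < β → β < omega1 → delta (f α) < delta (f β))

/-- The space `[Y]^{ω₁}` of subsets of `Y` of cardinality `ℵ₁`. -/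
def aleph1Pow (Y : Set Ordinal.{0}) : Set (Set Ordinal.{0}) :=
  {X | X ⊆ Y ∧ Cardinal.mk X = Cardinal.aleph 1}

/-- `C` is club in `[Y]^{ω₁}`: cofinal and closed under unions of
`⊆`-increasing chains of length `ω₁`. -/
def IsClubAleph1 (Y : Set Ordinal.{0}) (C : Set (Set Ordinal.{0})) : Prop :=
  C ⊆ aleph1Pow Y ∧ (∀ X ∈ aleph1Pow Y, ∃ Z ∈ C, X ⊆ Z) ∧
    ∀ f : Ordinal.{0} → Set Ordinal.{0}, (∀ α β, α < β → β < omega1 → f α ⊆ f β) →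
      (∀ α < omega1, f α ∈ C) → (⋃ α ∈ Set.Iio omega1, f α) ∈ C

/-- `S` is a local club in `[Y]^ω`: the set of `X ∈ [Y]^{ω₁}` such that
`S ∩ [X]^ω` contains a club in `[X]^ω` contains a club in `[Y]^{ω₁}`. -/
def IsLocalClub (Y : Set Ordinal.{0}) (S : Set (Set Ordinal.{0})) : Prop :=
  ∃ C, IsClubAleph1 Y C ∧ ∀ X ∈ C, ∃ D, IsClubIn X D ∧ D ⊆ S

/-- `S` is projective stationary in `[X]^ω`. -/
def ProjStationary (X : Set Ordinal.{0}) (S : Set (Set Ordinal.{0})) : Prop :=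
  ∀ A ⊆ Set.Iio omega1, IsStatOmega1 A → IsStatIn X {x ∈ S | delta x ∈ A}

/-- `S ⊆ [κ]^ω` is spanning. -/
def IsSpanning (κ : Cardinal) (S : Set (Set Ordinal.{0})) : Prop :=
  ∀ lam : Cardinal, κ ≤ lam → ∀ C, IsClubIn (Set.Iio lam.ord) C →
    ∃ D, IsClubIn (Set.Iio lam.ord) D ∧
      ∀ x ∈ D, ∃ y ∈ C, x ⊆ y ∧ delta x = delta y ∧ (y ∩ Set.Iio κ.ord) ∈ S

/-- `S ⊆ [X]^ω` is reflective: for every club `C`, `S ∩ C` contains an `ω₁`-chain. -/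
def IsReflective (X : Set Ordinal.{0}) (S : Set (Set Ordinal.{0})) : Prop :=
  ∀ C, IsClubIn X C → ∃ f, IsOmega1Chain f ∧ ∀ α < omega1, f α ∈ S ∩ C

/-- `S ⊆ [X]^ω` is full. -/
def IsFull (X : Set Ordinal.{0}) (S : Set (Set Ordinal.{0})) : Prop :=
  ∀ A ⊆ Set.Iio omega1, IsStatOmega1 A →
    ∃ B, B ⊆ A ∧ IsStatOmega1 B ∧ ∃ C, IsClubIn X C ∧ {x ∈ C | delta x ∈ B} ⊆ S

/-- The order type of a set of ordinals. -/
def otp (s : Set Ordinal.{0}) : Ordinal.{0} :=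
  sInf {o : Ordinal.{0} | Nonempty (↥s ≃o ↥(Set.Iio o))}

/-- The nonstationary ideal on `ω₁` is saturated. -/
def NSSaturated : Prop :=
  ∀ W : Set (Set Ordinal.{0}), (∀ A ∈ W, A ⊆ Set.Iio omega1 ∧ IsStatOmega1 A) →
    (∀ A ∈ W, ∀ B ∈ W, A ≠ B → ¬ IsStatOmega1 (A ∩ B)) →
    Cardinal.mk W ≤ Cardinal.aleph 1

/-! ### Auxiliary lemmas -/

lemma omega1_isLimit : Order.IsSuccLimit omega1 :=
  Cardinal.isSuccLimit_ord (Cardinal.aleph0_le_aleph 1)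

lemma omega1_pos : (0 : Ordinal.{0}) < omega1 := omega1_isLimit.pos

lemma omega1_le_ord {κ : Cardinal} (hκ : Cardinal.aleph0 < κ) : omega1 ≤ κ.ord :=
  Cardinal.ord_le_ord.2 (by
    rw [show Cardinal.aleph 1 = Order.succ Cardinal.aleph0 from Cardinal.succ_aleph0.symm]
    exact Order.succ_le_of_lt hκ)

lemma delta_spec {x : Set Ordinal.{0}} (h : GoodSet x) :
    x ∩ Set.Iio omega1 = Set.Iio (delta x) ∧ delta x < omega1 := by
  obtain ⟨δ, hδ, he⟩ := h
  have hne : {δ' : Ordinal.{0} | x ∩ Set.Iio omega1 = Set.Iio δ'}.Nonempty := ⟨δ, he⟩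
  have hmem : x ∩ Set.Iio omega1 = Set.Iio (delta x) := csInf_mem hne
  have : delta x = δ := Set.Iio_injective (hmem.symm.trans he)
  exact ⟨hmem, this ▸ hδ⟩

lemma good_of_countPow {X : Set Ordinal.{0}} {x : Set Ordinal.{0}} (h : x ∈ countPow X) :
    GoodSet x := h.2.2

lemma delta_lt_omega1 {X x} (h : x ∈ countPow X) : delta x < omega1 :=
  (delta_spec (good_of_countPow h)).2

lemma delta_inter {X x} (h : x ∈ countPow X) :
    x ∩ Set.Iio omega1 = Set.Iio (delta x) := (delta_spec (good_of_countPow h)).1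

lemma delta_mono {X x y} (hx : x ∈ countPow X) (hy : y ∈ countPow X) (hxy : x ⊆ y) :
    delta x ≤ delta y := by
  have h1 : Set.Iio (delta x) ⊆ Set.Iio (delta y) := by
    rw [← delta_inter hx, ← delta_inter hy]
    exact Set.inter_subset_inter_left _ hxy
  exact Set.Iio_subset_Iio_iff.1 h1

lemma empty_mem_countPow (X : Set Ordinal.{0}) : ∅ ∈ countPow X :=
  ⟨Set.empty_subset X, Set.countable_empty, 0, omega1_pos, by simp [Set.ext_iff]⟩

/-- The intersection of two clubs in `[X]^ω` is club. -/
lemma club_inter {X : Set Ordinal.{0}} {C C' : Set (Set Ordinal.{0})}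
    (hC : IsClubIn X C) (hC' : IsClubIn X C') : IsClubIn X (C ∩ C') := by
  obtain ⟨hC1, hC2, hC3⟩ := hC
  obtain ⟨hC'1, hC'2, hC'3⟩ := hC'
  refine ⟨fun x hx => hC1 hx.1, ?_, fun D hD hc hne hch =>
    ⟨hC3 D (fun d hd => (hD hd).1) hc hne hch, hC'3 D (fun d hd => (hD hd).2) hc hne hch⟩⟩
  intro x hx
  have eC : ∀ z : Set Ordinal.{0}, ∃ y, z ∈ countPow X → y ∈ C ∧ z ⊆ y := by
    intro z
    by_cases hz : z ∈ countPow X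
    · obtain ⟨y, hy, hzy⟩ := hC2 z hz; exact ⟨y, fun _ => ⟨hy, hzy⟩⟩
    · exact ⟨∅, fun hz' => absurd hz' hz⟩
  have eC' : ∀ z : Set Ordinal.{0}, ∃ y, z ∈ countPow X → y ∈ C' ∧ z ⊆ y := by
    intro z
    by_cases hz : z ∈ countPow X
    · obtain ⟨y, hy, hzy⟩ := hC'2 z hz; exact ⟨y, fun _ => ⟨hy, hzy⟩⟩
    · exact ⟨∅, fun hz' => absurd hz' hz⟩
  choose FC hFC using eC
  choose FC' hFC' using eC'
  let g : ℕ → Set Ordinal.{0} := fun n =>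
    Nat.rec (FC x) (fun n y => if n % 2 = 0 then FC' y else FC y) n
  have gsucc : ∀ n, g (n + 1) = if n % 2 = 0 then FC' (g n) else FC (g n) := fun n => rfl
  have g0 : g 0 = FC x := rfl
  have inv : ∀ n, g n ∈ countPow X ∧ g n ⊆ g (n + 1) ∧
      (n % 2 = 0 → g n ∈ C) ∧ (n % 2 = 1 → g n ∈ C') := by
    intro n
    induction n with
    | zero =>
      have h0 := hFC x hx
      refine ⟨hC1 h0.1, ?_, fun _ => h0.1, fun h => by omega⟩
      rw [gsucc 0, if_pos rfl]
      exact (hFC' (g 0) (hC1 h0.1)).2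
    | succ n ih =>
      obtain ⟨hcp, hsub, he, ho⟩ := ih
      by_cases hn : n % 2 = 0
      · have hmem : g (n + 1) ∈ C' := by
          rw [gsucc n, if_pos hn]; exact (hFC' (g n) hcp).1
        have hcp' : g (n + 1) ∈ countPow X := hC'1 hmem
        refine ⟨hcp', ?_, fun h => by omega, fun _ => hmem⟩
        rw [gsucc (n + 1), if_neg (by omega)]
        exact (hFC (g (n + 1)) hcp').2
      · have hmem : g (n + 1) ∈ C := by
          rw [gsucc n, if_neg hn]; exact (hFC (g n) hcp).1
        have hcp' : g (n + 1) ∈ countPow X := hC1 hmem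
        refine ⟨hcp', ?_, fun _ => hmem, fun h => by omega⟩
        rw [gsucc (n + 1), if_pos (by omega)]
        exact (hFC' (g (n + 1)) hcp').2
  have gmono : ∀ m n, m ≤ n → g m ⊆ g n := by
    intro m n hmn
    induction n with
    | zero => rw [Nat.le_zero.1 hmn]
    | succ n ih =>
      rcases Nat.lt_or_ge m (n + 1) with h | h
      · exact (ih (by omega)).trans (inv n).2.1
      · rw [show m = n + 1 by omega]
  have chain_img : ∀ s : Set ℕ, IsChain (· ⊆ ·) (g '' s) := by
    intro s a ha b hb hab
    obtain ⟨m, _, rfl⟩ := ha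
    obtain ⟨n, _, rfl⟩ := hb
    rcases Nat.le_or_le m n with h | h
    · exact Or.inl (gmono m n h)
    · exact Or.inr (gmono n m h)
  have hEsub : ∀ s : Set ℕ, (∀ n ∈ s, n % 2 = 0) → g '' s ⊆ C := by
    intro s hs y hy
    obtain ⟨n, hn, rfl⟩ := hy
    exact (inv n).2.2.1 (hs n hn)
  have hE'sub : ∀ s : Set ℕ, (∀ n ∈ s, n % 2 = 1) → g '' s ⊆ C' := by
    intro s hs y hy
    obtain ⟨n, hn, rfl⟩ := hy
    exact (inv n).2.2.2 (hs n hn)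
  set s0 : Set ℕ := {n | n % 2 = 0} with hs0
  set s1 : Set ℕ := {n | n % 2 = 1} with hs1
  have hy0 : ⋃₀ (g '' s0) ∈ C :=
    hC3 _ (hEsub s0 (fun n hn => hn)) ((Set.to_countable _).image g)
      ⟨g 0, 0, (by rfl : (0:ℕ) % 2 = 0), rfl⟩ (chain_img s0)
  have hy1 : ⋃₀ (g '' s1) ∈ C' :=
    hC'3 _ (hE'sub s1 (fun n hn => hn)) ((Set.to_countable _).image g)
      ⟨g 1, 1, (by rfl : (1:ℕ) % 2 = 1), rfl⟩ (chain_img s1)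
  have heq : ⋃₀ (g '' s0) = ⋃₀ (g '' s1) := by
    apply Set.Subset.antisymm
    · rintro z ⟨t, ⟨n, hn, rfl⟩, hz⟩
      have hn' : n % 2 = 0 := hn
      exact ⟨g (n + 1), ⟨n + 1, show (n + 1) % 2 = 1 by omega, rfl⟩, (inv n).2.1 hz⟩
    · rintro z ⟨t, ⟨n, hn, rfl⟩, hz⟩
      have hn' : n % 2 = 1 := hn
      exact ⟨g (n + 1), ⟨n + 1, show (n + 1) % 2 = 0 by omega, rfl⟩, (inv n).2.1 hz⟩
  refine ⟨⋃₀ (g '' s0), ⟨hy0, heq ▸ hy1⟩, ?_⟩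
  have : x ⊆ g 0 := (hFC x hx).2
  exact this.trans (Set.subset_sUnion_of_mem ⟨0, (by rfl : (0:ℕ) % 2 = 0), rfl⟩)

/-! ### The transfinite chain through a club -/

open scoped Classical in
/-- A continuous chain through `D` obtained by transfinite recursion. -/
noncomputable def chainF (D : Set (Set Ordinal.{0})) : Ordinal.{0} → Set Ordinal.{0} :=
  fun α => Ordinal.limitRecOn α
    (if h : ∃ z, z ∈ D then h.choose else ∅)
    (fun _ y => if h : ∃ z ∈ D, insert (delta y) y ⊆ z then h.choose else ∅)
    (fun o _ IH => ⋃ β : Set.Iio o, IH β.1 β.2)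

open scoped Classical in
lemma chainF_zero (D : Set (Set Ordinal.{0})) :
    chainF D 0 = if h : ∃ z, z ∈ D then h.choose else ∅ := by
  unfold chainF; rw [Ordinal.limitRecOn_zero]

open scoped Classical in
lemma chainF_succ (D : Set (Set Ordinal.{0})) (α : Ordinal.{0}) :
    chainF D (Order.succ α) =
      if h : ∃ z ∈ D, insert (delta (chainF D α)) (chainF D α) ⊆ z then h.choose else ∅ := by
  conv_lhs => unfold chainF
  rw [Ordinal.limitRecOn_succ]
  rfl

lemma chainF_limit (D : Set (Set Ordinal.{0})) {o : Ordinal.{0}} (h : Order.IsSuccLimit o) :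
    chainF D o = ⋃ β : Set.Iio o, chainF D β.1 := by
  conv_lhs => unfold chainF
  rw [Ordinal.limitRecOn_limit _ _ _ _ h]
  rfl

lemma Iio_countable {o : Ordinal.{0}} (h : o < omega1) : (Set.Iio o).Countable := by
  rw [Cardinal.countable_iff_lt_aleph_one, Ordinal.mk_Iio_ordinal]
  have h1 : o.card < Cardinal.aleph 1 := Cardinal.lt_ord.1 h
  have h2 := Cardinal.lift_lt.{0, 1}.2 h1
  rwa [Cardinal.lift_aleph, Ordinal.lift_one] at h2

lemma chainF_invariant {κ : Cardinal} (hκ : Cardinal.aleph0 < κ) {D : Set (Set Ordinal.{0})}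
    (hD : IsClubIn (Set.Iio κ.ord) D) :
    ∀ α < omega1, chainF D α ∈ D ∧
      ∀ β < α, chainF D β ⊆ chainF D α ∧ delta (chainF D β) < delta (chainF D α) := by
  intro α
  induction α using Ordinal.induction with
  | h α IH =>
  intro hα
  rcases Ordinal.zero_or_succ_or_isSuccLimit α with rfl | ⟨β, rfl⟩ | hlim
  · have h0 : ∃ z, z ∈ D := by
      obtain ⟨z, hz, -⟩ := hD.2.1 ∅ (empty_mem_countPow _)
      exact ⟨z, hz⟩
    rw [chainF_zero, dif_pos h0]
    exact ⟨h0.choose_spec, fun β hβ => absurd hβ (not_lt_of_ge (zero_le (a := β)))⟩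
  · have hβω : β < omega1 := lt_trans (Order.lt_succ β) hα
    obtain ⟨hβD, hIH⟩ := IH β (Order.lt_succ β) hβω
    have hβcp : chainF D β ∈ countPow (Set.Iio κ.ord) := hD.1 hβD
    have hδ : delta (chainF D β) < omega1 := delta_lt_omega1 hβcp
    have hins : insert (delta (chainF D β)) (chainF D β) ∈ countPow (Set.Iio κ.ord) := by
      refine ⟨Set.insert_subset (lt_of_lt_of_le hδ (omega1_le_ord hκ)) hβcp.1,
        hβcp.2.1.insert _, Order.succ (delta (chainF D β)), omega1_isLimit.succ_lt hδ, ?_⟩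
      rw [Set.insert_inter_of_mem (show delta (chainF D β) ∈ Set.Iio omega1 from hδ), delta_inter hβcp, Order.Iio_succ, Set.Iio_insert]
    obtain h := hD.2.1 _ hins
    rw [chainF_succ, dif_pos h]
    obtain ⟨hzD, hzsub⟩ := h.choose_spec
    have hsub : chainF D β ⊆ h.choose := (Set.subset_insert _ _).trans hzsub
    have hzcp : h.choose ∈ countPow (Set.Iio κ.ord) := hD.1 hzD
    have hdlt : delta (chainF D β) < delta h.choose := by
      have hmem : delta (chainF D β) ∈ h.choose ∩ Set.Iio omega1 :=
        ⟨hzsub (Set.mem_insert _ _), hδ⟩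
      rw [delta_inter hzcp] at hmem
      exact hmem
    refine ⟨hzD, fun γ hγ => ?_⟩
    rcases (Order.lt_succ_iff.1 hγ).lt_or_eq with hlt | rfl
    · obtain ⟨h1, h2⟩ := hIH γ hlt
      exact ⟨h1.trans hsub, h2.trans hdlt⟩
    · exact ⟨hsub, hdlt⟩
  · -- limit case
    have hmem : ∀ β (hβ : β < α), chainF D β ∈ D := fun β hβ => (IH β hβ (hβ.trans hα)).1
    have hchain : IsChain (· ⊆ ·) (chainF D '' Set.Iio α) := by
      rintro a ⟨β, hβ, rfl⟩ b ⟨γ, hγ, rfl⟩ -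
      rcases le_or_gt β γ with h | h
      · rcases h.lt_or_eq with h | rfl
        · exact Or.inl ((IH γ hγ (hγ.trans hα)).2 β h).1
        · exact Or.inl (subset_refl _)
      · exact Or.inr ((IH β hβ (hβ.trans hα)).2 γ h).1
    have hUeq : ⋃₀ (chainF D '' Set.Iio α) = chainF D α := by
      rw [chainF_limit D hlim, Set.sUnion_image, Set.biUnion_eq_iUnion]
    have hαD : chainF D α ∈ D := by
      rw [← hUeq]
      exact hD.2.2 _ (by rintro a ⟨β, hβ, rfl⟩; exact hmem β hβ)
        ((Iio_countable (hα.trans_le le_rfl)).image _)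
        ⟨chainF D 0, 0, hlim.pos, rfl⟩ hchain
    refine ⟨hαD, fun β hβ => ?_⟩
    have hsub : chainF D β ⊆ chainF D α := by
      rw [chainF_limit D hlim]
      exact fun z hz => Set.mem_iUnion.2 ⟨⟨β, hβ⟩, hz⟩
    refine ⟨hsub, ?_⟩
    have hsβ : Order.succ β < α := hlim.succ_lt hβ
    have h1 : delta (chainF D β) < delta (chainF D (Order.succ β)) :=
      ((IH (Order.succ β) hsβ (hsβ.trans hα)).2 β (Order.lt_succ β)).2
    have h2 : delta (chainF D (Order.succ β)) ≤ delta (chainF D α) := by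
      refine delta_mono (hD.1 (hmem _ hsβ)) (hD.1 hαD) ?_
      rw [chainF_limit D hlim]
      exact fun z hz => Set.mem_iUnion.2 ⟨⟨_, hsβ⟩, hz⟩
    exact h1.trans_le h2

lemma chainF_continuity {κ : Cardinal} (hκ : Cardinal.aleph0 < κ) {D : Set (Set Ordinal.{0})}
    (hD : IsClubIn (Set.Iio κ.ord) D) {o : Ordinal.{0}} (ho : o < omega1) (hlim : Order.IsSuccLimit o)
    {x : Ordinal.{0}} (hx : x < delta (chainF D o)) : ∃ β < o, x < delta (chainF D β) := by
  have hocp := hD.1 (chainF_invariant hκ hD o ho).1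
  have hxm : x ∈ chainF D o ∩ Set.Iio omega1 := by rw [delta_inter hocp]; exact hx
  obtain ⟨hx1, hx2⟩ := hxm
  rw [chainF_limit D hlim] at hx1
  obtain ⟨t, ⟨⟨β, hβ⟩, rfl⟩, hxt⟩ := hx1
  have hβcp := hD.1 (chainF_invariant hκ hD β (hβ.trans ho)).1
  refine ⟨β, hβ, ?_⟩
  have : x ∈ chainF D β ∩ Set.Iio omega1 := ⟨hxt, hx2⟩
  rw [delta_inter hβcp] at this
  exact this

/-! ### Every club in `[κ]^ω` meets every stationary set of deltas -/

lemma exists_mem_delta_mem {κ : Cardinal} (hκ : Cardinal.aleph0 < κ) {D : Set (Set Ordinal.{0})}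
    (hD : IsClubIn (Set.Iio κ.ord) D) {B : Set Ordinal.{0}} (hB : IsStatOmega1 B) :
    ∃ x ∈ D, delta x ∈ B := by
  have inv := chainF_invariant hκ hD
  set g : Ordinal.{0} → Ordinal.{0} := fun α => delta (chainF D α) with hg
  have glt : ∀ α < omega1, g α < omega1 := fun α hα => delta_lt_omega1 (hD.1 (inv α hα).1)
  have gstrict : ∀ β α, β < α → α < omega1 → g β < g α := fun β α hβα hα =>
    ((inv α hα).2 β hβα).2
  have gmono : ∀ β α, β ≤ α → α < omega1 → g β ≤ g α := by
    intro β α hβα hα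
    rcases hβα.lt_or_eq with h | rfl
    · exact (gstrict β α h hα).le
    · exact le_rfl
  have gid : ∀ α < omega1, α ≤ g α := by
    intro α
    induction α using Ordinal.induction with
    | h α IH =>
    intro hα
    by_contra hcon
    push_neg at hcon
    have h1 : g α ≤ g (g α) := IH (g α) hcon (hcon.trans hα)
    have h2 : g (g α) < g α := gstrict (g α) α hcon hα
    exact absurd (h1.trans_lt h2) (lt_irrefl _)
  set E : Set Ordinal.{0} := g '' Set.Iio omega1 with hE
  have hclub : IsClubOmega1 E := by
    refine ⟨?_, ?_, ?_⟩
    · rintro γ ⟨ξ, hξ, rfl⟩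
      exact glt ξ hξ
    · intro α hα
      have hsα : Order.succ α < omega1 := omega1_isLimit.succ_lt hα
      exact ⟨g (Order.succ α), ⟨Order.succ α, hsα, rfl⟩,
        (gid α hα).trans_lt (gstrict α (Order.succ α) (Order.lt_succ α) hsα)⟩
    · intro α hα hα0 hcl
      set T : Set Ordinal.{0} := {β | α ≤ g β} with hT
      have hTne : T.Nonempty := ⟨α, gid α hα⟩
      set μ := sInf T with hμ
      have hμT : α ≤ g μ := show μ ∈ T from csInf_mem hTne
      have hμα : μ ≤ α := csInf_le' (show α ∈ T from gid α hα)
      have hμω : μ < omega1 := hμα.trans_lt hα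
      have hlt : ∀ β, β < μ → g β < α := by
        intro β hβ
        by_contra hc
        push_neg at hc
        exact absurd (csInf_le' (show β ∈ T from hc)) (not_le.2 hβ)
      have hElt : ∀ γ ∈ E, γ < α → ∃ ξ, ξ < μ ∧ γ = g ξ := by
        rintro γ ⟨ξ, hξ, rfl⟩ hγα
        refine ⟨ξ, ?_, rfl⟩
        by_contra hc
        push_neg at hc
        exact absurd ((hμT.trans (gmono μ ξ hc hξ)).trans_lt hγα) (lt_irrefl _)
      rcases Ordinal.zero_or_succ_or_isSuccLimit μ with hμ0 | ⟨ν, hν⟩ | hμlim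
      · exfalso
        obtain ⟨γ, hγE, hγ0, hγα⟩ := hcl 0 (pos_iff_ne_zero.2 hα0)
        obtain ⟨ξ, hξμ, rfl⟩ := hElt γ hγE hγα
        rw [hμ0] at hξμ
        exact absurd hξμ (not_lt_of_ge (zero_le (a := ξ)))
      · exfalso
        have hνμ : ν < μ := hν.symm ▸ Order.lt_succ ν
        have hgν : g ν < α := hlt ν hνμ
        obtain ⟨γ, hγE, hγgt, hγα⟩ := hcl (g ν) hgν
        obtain ⟨ξ, hξμ, rfl⟩ := hElt γ hγE hγα
        have : ξ ≤ ν := Order.lt_succ_iff.1 (hν.symm ▸ hξμ)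
        exact absurd (hγgt.trans_le (gmono ξ ν this (hνμ.trans hμω))) (lt_irrefl _)
      · have : g μ = α := by
          rcases hμT.lt_or_eq with hc | h
          · obtain ⟨β, hβμ, hβ⟩ := chainF_continuity hκ hD hμω hμlim hc
            exact absurd (hβ.trans (hlt β hβμ)) (lt_irrefl _)
          · exact h.symm
        exact ⟨μ, hμω, this⟩
  obtain ⟨δ, hδB, hδE⟩ := hB E hclub
  obtain ⟨ξ, hξ, rfl⟩ := hδE
  exact ⟨chainF D ξ, (inv ξ hξ).1, hδB⟩

/-- every full set `S ⊆ [κ]^ω` is projective stationary. -/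
theorem full_implies_projectiveStationary (κ : Cardinal) (hκ : Cardinal.aleph0 < κ)
    (S : Set (Set Ordinal.{0})) (hS : S ⊆ countPow (Set.Iio κ.ord))
    (h : IsFull (Set.Iio κ.ord) S) :
    ProjStationary (Set.Iio κ.ord) S := by
  intro A hA hAstat
  obtain ⟨B, hBA, hBstat, C, hCclub, hCS⟩ := h A hA hAstat
  intro C' hC'
  obtain ⟨x, hxD, hxB⟩ := exists_mem_delta_mem hκ (club_inter hCclub hC') hBstat
  exact ⟨x, ⟨hCS ⟨hxD.1, hxB⟩, hBA hxB⟩, hxD.2⟩
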